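/- Let s_0, s_1, s_2 be the 3-hyperbolic functions, s_k(z) = (1/3) Σ_{m=0}^{2} ζ^{-km} e^{z ζ^m} with ζ = e^{2πi/3}. Then for all z ∈ ℂ: s_0(z)³ + s_1(z)³ + s_2(z)³ − 3 s_0(z) s_1(z) s_2(z) = 1. -/

import Mathlib

open Complex Finset

noncomputable def zeta3 : ℂ := Complex.exp (2 * Real.pi * Complex.I / 3)

noncomputable def s3 (k : ℕ) (z : ℂ) : ℂ :=
  (1 / 3) * ∑ m ∈ Finset.range 3, ((zeta3 ^ m)⁻¹) ^ k * Complex.exp (z * zeta3 ^ m)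

lemma key_identity (a b c w : ℂ) (h : w^2 + w + 1 = 0) :
    ((a+b+c)/3)^3 + ((a+w^2*b+w*c)/3)^3 + ((a+w*b+w^2*c)/3)^3
      - 3*((a+b+c)/3)*((a+w^2*b+w*c)/3)*((a+w*b+w^2*c)/3) = a*b*c := by
  linear_combination (1/27*c^3 - 1/27*c^3*w - 1/27*c^3*w^3 + 1/27*c^3*w^4
    + 1/9*b*c^2 - 1/9*b*c^2*w - 1/9*b*c^2*w^2 + 1/9*b*c^2*w^3
    + 1/9*b^2*c - 1/9*b^2*c*w - 1/9*b^2*c*w^2 + 1/9*b^2*c*w^3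
    + 1/27*b^3 - 1/27*b^3*w - 1/27*b^3*w^3 + 1/27*b^3*w^4
    + 1/9*a*c^2 - 2/9*a*c^2*w + 1/9*a*c^2*w^2
    - 7/9*a*b*c + 5/9*a*b*c*w - 1/9*a*b*c*w^2
    + 1/9*a*b^2 - 2/9*a*b^2*w + 1/9*a*b^2*w^2) * h

lemma zeta3_cube : zeta3 ^ 3 = 1 := by
  rw [zeta3, ← Complex.exp_nat_mul]
  rw [show (3:ℕ) * (2 * ↑Real.pi * Complex.I / 3) = 2 * ↑Real.pi * Complex.I by
    push_cast; ring]
  exact Complex.exp_two_pi_mul_I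

lemma zeta3_ne_one : zeta3 ≠ 1 := by
  intro hone
  rw [zeta3] at hone
  rw [Complex.exp_eq_one_iff] at hone
  obtain ⟨n, hn⟩ := hone
  have hpi : (Real.pi : ℂ) ≠ 0 := by
    simpa using Real.pi_ne_zero
  have hI : Complex.I ≠ 0 := Complex.I_ne_zero
  have h3 : (n : ℂ) * 3 = 1 := by
    field_simp at hn
    have hne : (2 : ℂ) * Real.pi * I ≠ 0 := by
      simp [hpi, hI]
    have hn' : (2 * (Real.pi : ℂ) * I) * 1 = (2 * (Real.pi : ℂ) * I) * ((n : ℂ) * 3) := by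
      linear_combination (2 * (Real.pi : ℂ) * I) * hn
    have := mul_left_cancel₀ hne hn'
    linear_combination -this
  have : (n * 3 : ℤ) = 1 := by exact_mod_cast h3
  omega

lemma zeta3_rel : zeta3 ^ 2 + zeta3 + 1 = 0 := by
  have h : (zeta3 - 1) * (zeta3 ^ 2 + zeta3 + 1) = 0 := by
    linear_combination zeta3_cube
  rcases mul_eq_zero.mp h with h1 | h2
  · exact absurd (by linear_combination h1) zeta3_ne_one
  · exact h2

theorem s3_main_identity (z : ℂ) :
    s3 0 z ^ 3 + s3 1 z ^ 3 + s3 2 z ^ 3 - 3 * s3 0 z * s3 1 z * s3 2 z = 1 := by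
  set w := zeta3 with hw
  have hrel : w ^ 2 + w + 1 = 0 := zeta3_rel
  have hcube : w ^ 3 = 1 := zeta3_cube
  have hinv1 : (w)⁻¹ = w ^ 2 := by
    apply inv_eq_of_mul_eq_one_right; linear_combination hcube
  have hinv2 : (w ^ 2)⁻¹ = w := by
    apply inv_eq_of_mul_eq_one_right; linear_combination hcube
  set a := Complex.exp z with ha
  set b := Complex.exp (z * w) with hb
  set c := Complex.exp (z * w ^ 2) with hc
  have e0 : s3 0 z = (a + b + c) / 3 := by
    simp [s3, Finset.sum_range_succ, ha, hb, hc, ← hw]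
    ring
  have e1 : s3 1 z = (a + w^2 * b + w * c) / 3 := by
    simp [s3, Finset.sum_range_succ, hinv1, hinv2, ha, hb, hc, ← hw]
    ring
  have e2 : s3 2 z = (a + w * b + w^2 * c) / 3 := by
    simp only [s3, Finset.sum_range_succ, Finset.sum_range_zero, pow_zero, pow_one,
      inv_one, one_pow, mul_one, ← hw, hinv1, hinv2, ← ha, ← hb, ← hc]
    have : (w ^ 2) ^ 2 = w := by linear_combination w * hcube
    rw [this, zero_add]
    ring
  rw [e0, e1, e2, key_identity a b c w hrel]
  rw [ha, hb, hc, ← Complex.exp_add, ← Complex.exp_add]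
  rw [show z + z * w + z * w ^ 2 = 0 by linear_combination z * hrel]
  exact Complex.exp_zero
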